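/- arXiv:1805.08959 — 5 statements merged into one kernel-verified Lean document; each statement's English description precedes it below -/
import Mathlib

section
/- Let F be an algebraically closed field of characteristic zero, n, α₁, α₂ ≥ 2 integers, and p ∈ F[x,y,t] with p(0,0,0) ≠ 0. Then the hypersurface X = {(x,y,z,t) ∈ A⁴ : xⁿz = y^{α₁} + t^{α₂} + x·p(x,y,t)} is smooth, i.e., at every point of X the gradient of f(x,y,z,t) = xⁿz - y^{α₁} - t^{α₂} - x·p(x,y,t) is nonzero. -/
open MvPolynomial

/-- The deformed Koras-Russell 3-fold
`{xⁿz = y^α₁ + t^α₂ + x·p(x,y,t)}` with `p(0,0,0) ≠ 0` is smooth: at every point of the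
hypersurface the gradient of the defining polynomial is nonzero (Jacobian criterion). -/
theorem stmt_2 (F : Type*) [Field F] [IsAlgClosed F] [CharZero F]
    (n α₁ α₂ : ℕ) (hn : 2 ≤ n) (h1 : 2 ≤ α₁) (h2 : 2 ≤ α₂)
    (p : MvPolynomial (Fin 3) F) (hp : MvPolynomial.eval (0 : Fin 3 → F) p ≠ 0) :
    ∀ v : Fin 4 → F,
      MvPolynomial.eval v
        ((X 0 : MvPolynomial (Fin 4) F) ^ n * X 2 - X 1 ^ α₁ - X 3 ^ α₂ -
          X 0 * MvPolynomial.rename (![0, 1, 3] : Fin 3 → Fin 4) p) = 0 →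
      ∃ i : Fin 4,
        MvPolynomial.eval v
          (MvPolynomial.pderiv i
            ((X 0 : MvPolynomial (Fin 4) F) ^ n * X 2 - X 1 ^ α₁ - X 3 ^ α₂ -
              X 0 * MvPolynomial.rename (![0, 1, 3] : Fin 3 → Fin 4) p)) ≠ 0 := by
  intro v hv
  by_contra hcon
  push_neg at hcon
  set g : Fin 3 → Fin 4 := ![0, 1, 3] with hg
  set q : MvPolynomial (Fin 4) F := rename g p with hq
  -- variable 2 does not occur in q
  have h2nv : ∀ k : Fin 3, g k ≠ 2 := by decide
  have hqvars : (2 : Fin 4) ∉ q.vars := by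
    intro h
    obtain ⟨k, _, hk⟩ := mem_vars_rename g p h
    exact h2nv k hk
  have hpq2 : pderiv (2 : Fin 4) q = 0 := pderiv_eq_zero_of_notMem_vars hqvars
  -- partial derivative w.r.t. z (i = 2)
  have e2 := hcon 2
  simp only [map_sub, map_mul, map_pow, pderiv_X_self, pderiv_mul, pderiv_pow,
    pderiv_X_of_ne (show (1 : Fin 4) ≠ 2 by decide),
    pderiv_X_of_ne (show (3 : Fin 4) ≠ 2 by decide),
    pderiv_X_of_ne (show (0 : Fin 4) ≠ 2 by decide), hpq2,
    eval_X, eval_pow, mul_zero, zero_mul, mul_one, sub_zero, zero_sub, map_neg,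
    map_mul, map_pow, map_zero, add_zero, zero_add, neg_eq_zero, mul_eq_zero] at e2
  have hv0 : v 0 = 0 := pow_eq_zero_iff (show n ≠ 0 by omega) |>.mp e2
  -- partial derivative w.r.t. y (i = 1)
  have e1 := hcon 1
  simp only [map_sub, map_mul, map_pow, pderiv_X_self, pderiv_mul, pderiv_pow,
    pderiv_X_of_ne (show (2 : Fin 4) ≠ 1 by decide),
    pderiv_X_of_ne (show (3 : Fin 4) ≠ 1 by decide),
    pderiv_X_of_ne (show (0 : Fin 4) ≠ 1 by decide),
    eval_X, eval_pow, eval_mul, eval_sub, map_natCast, mul_zero, zero_mul, mul_one,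
    sub_zero, zero_sub, zero_add, add_zero, hv0] at e1
  have hv1 : v 1 = 0 := by
    simp only [map_neg, map_mul, map_pow, map_natCast, eval_X, neg_eq_zero, mul_eq_zero,
      Nat.cast_eq_zero, pow_eq_zero_iff (show α₁ - 1 ≠ 0 by omega)] at e1
    rcases e1 with h | h
    · omega
    · exact h
  -- partial derivative w.r.t. t (i = 3)
  have e3 := hcon 3
  simp only [map_sub, map_mul, map_pow, pderiv_X_self, pderiv_mul, pderiv_pow,
    pderiv_X_of_ne (show (2 : Fin 4) ≠ 3 by decide),
    pderiv_X_of_ne (show (1 : Fin 4) ≠ 3 by decide),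
    pderiv_X_of_ne (show (0 : Fin 4) ≠ 3 by decide),
    eval_X, eval_pow, eval_mul, eval_sub, map_natCast, mul_zero, zero_mul, mul_one,
    sub_zero, zero_sub, zero_add, add_zero, hv0] at e3
  have hv3 : v 3 = 0 := by
    simp only [map_neg, map_mul, map_pow, map_natCast, eval_X, neg_eq_zero, mul_eq_zero,
      Nat.cast_eq_zero, pow_eq_zero_iff (show α₂ - 1 ≠ 0 by omega)] at e3
    rcases e3 with h | h
    · omega
    · exact h
  -- partial derivative w.r.t. x (i = 0)
  have e0 := hcon 0
  simp only [map_sub, map_mul, map_pow, pderiv_X_self, pderiv_mul, pderiv_pow,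
    pderiv_X_of_ne (show (2 : Fin 4) ≠ 0 by decide),
    pderiv_X_of_ne (show (1 : Fin 4) ≠ 0 by decide),
    pderiv_X_of_ne (show (3 : Fin 4) ≠ 0 by decide),
    eval_X, eval_pow, eval_mul, eval_sub, eval_add, map_natCast, map_add,
    mul_zero, zero_mul, mul_one, one_mul, sub_zero, zero_sub, zero_add, add_zero, hv0] at e0
  have hq0 : eval v q = 0 := by
    have hz : (0 : F) ^ (n - 1) = 0 := zero_pow (by omega)
    simpa [hz] using e0
  -- but eval v q = eval 0 p ≠ 0
  have : eval v q = eval (0 : Fin 3 → F) p := by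
    rw [hq, eval_rename,
      show v ∘ g = (0 : Fin 3 → F) from funext fun k => by
        fin_cases k <;> simp [hg, hv0, hv1, hv3]]
  rw [this] at hq0
  exact hp hq0
end

section
/- Let F be a field, n, α₁, α₂ ≥ 2 integers, and p ∈ F[x,y,t]. Then the derivation ∂ on the coordinate ring A = F[x,y,z,t]/(xⁿz - y^{α₁} - t^{α₂} - x·p(x,y,t)) determined by ∂x = 0, ∂t = 0, ∂y = xⁿ, ∂z = α₁y^{α₁-1} + x·(∂p/∂y)(x,y,t) is a well-defined locally nilpotent F-derivation of A. -/
open MvPolynomial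

set_option synthInstance.maxHeartbeats 1000000
set_option maxHeartbeats 1000000

section Aux

variable {F R : Type*} [CommRing F] [CommRing R] [Algebra F R]

lemma aux_pow_zero_of_le (d : R →ₗ[F] R) {m N : ℕ} (h : m ≤ N) {a : R}
    (ha : (d ^ m) a = 0) : (d ^ N) a = 0 := by
  obtain ⟨k, rfl⟩ := Nat.exists_eq_add_of_le h
  rw [add_comm, pow_add, Module.End.mul_apply, ha, map_zero]

lemma aux_mul (D : Derivation F R R) :
    ∀ N m k (a b : R), m + k = N → (D.toLinearMap ^ m) a = 0 →
      (D.toLinearMap ^ k) b = 0 → (D.toLinearMap ^ N) (a * b) = 0 := by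
  intro N
  induction N with
  | zero =>
    intro m k a b hmk ha _
    obtain ⟨rfl, rfl⟩ := Nat.add_eq_zero.mp hmk
    rw [pow_zero, Module.End.one_apply] at ha
    simp [ha]
  | succ N ih =>
    intro m k a b hmk ha hb
    match m, k with
    | 0, k =>
      rw [pow_zero, Module.End.one_apply] at ha
      simp [ha]
    | m + 1, 0 =>
      rw [pow_zero, Module.End.one_apply] at hb
      simp [hb]
    | m + 1, k + 1 =>
      rw [pow_succ, Module.End.mul_apply]
      have hD : D.toLinearMap (a * b) = a * D b + b * D a := by
        have := D.leibniz a b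
        simpa [smul_eq_mul] using this
      rw [hD, map_add]
      have h1 : (D.toLinearMap ^ N) (a * D b) = 0 := by
        refine ih (m + 1) k a (D b) (by omega) ha ?_
        rw [show (D.toLinearMap ^ k) (D b) = (D.toLinearMap ^ (k + 1)) b by
          rw [pow_succ, Module.End.mul_apply]; rfl]
        exact hb
      have h2 : (D.toLinearMap ^ N) (b * D a) = 0 := by
        refine ih (k + 1) m b (D a) (by omega) hb ?_
        rw [show (D.toLinearMap ^ m) (D a) = (D.toLinearMap ^ (m + 1)) a by
          rw [pow_succ, Module.End.mul_apply]; rfl]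
        exact ha
      rw [h1, h2, add_zero]

/-- The subalgebra of elements on which a derivation is locally nilpotent. -/
def nilAlg (F R : Type*) [CommRing F] [CommRing R] [Algebra F R]
    (D : Derivation F R R) : Subalgebra F R where
  carrier := {a | ∃ N, (D.toLinearMap ^ N) a = 0}
  add_mem' := by
    rintro a b ⟨m, ha⟩ ⟨k, hb⟩
    exact ⟨max m k, by
      rw [map_add, aux_pow_zero_of_le _ (le_max_left m k) ha,
        aux_pow_zero_of_le _ (le_max_right m k) hb, add_zero]⟩
  mul_mem' := by
    rintro a b ⟨m, ha⟩ ⟨k, hb⟩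
    exact ⟨m + k, aux_mul D (m + k) m k a b rfl ha hb⟩
  algebraMap_mem' := fun r => ⟨1, by
    rw [pow_one]
    exact D.map_algebraMap r⟩

lemma mem_nilAlg_of_D {D : Derivation F R R} {a : R}
    (h : D a ∈ nilAlg F R D) : a ∈ nilAlg F R D := by
  obtain ⟨N, hN⟩ := h
  exact ⟨N + 1, by rw [pow_succ, Module.End.mul_apply]; exact hN⟩

end Aux

/-- The derivation `∂` with `∂x = ∂t = 0`, `∂y = xⁿ`,
`∂z = α₁y^{α₁-1} + x·(∂p/∂y)` descends to a well-defined locally nilpotent `F`-derivation of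
the coordinate ring `A = F[x,y,z,t]/(xⁿz - y^α₁ - t^α₂ - x·p(x,y,t))`. -/
theorem stmt_4 (F : Type*) [Field F] (n α₁ α₂ : ℕ) (hn : 2 ≤ n) (h1 : 2 ≤ α₁) (h2 : 2 ≤ α₂)
    (p : MvPolynomial (Fin 3) F) :
    let J : Ideal (MvPolynomial (Fin 4) F) :=
      Ideal.span {(X 0 : MvPolynomial (Fin 4) F) ^ n * X 2 - X 1 ^ α₁ - X 3 ^ α₂ -
        X 0 * MvPolynomial.rename (![0, 1, 3] : Fin 3 → Fin 4) p}
    ∃ D : Derivation F (MvPolynomial (Fin 4) F ⧸ J) (MvPolynomial (Fin 4) F ⧸ J),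
      D (Ideal.Quotient.mk J (X 0)) = 0 ∧
      D (Ideal.Quotient.mk J (X 3)) = 0 ∧
      D (Ideal.Quotient.mk J (X 1)) = Ideal.Quotient.mk J (X 0 ^ n) ∧
      D (Ideal.Quotient.mk J (X 2)) =
        Ideal.Quotient.mk J
          (C (α₁ : F) * X 1 ^ (α₁ - 1) +
            X 0 * MvPolynomial.pderiv 1
              (MvPolynomial.rename (![0, 1, 3] : Fin 3 → Fin 4) p)) ∧
      ∀ a : MvPolynomial (Fin 4) F ⧸ J, ∃ N : ℕ, (⇑D)^[N] a = 0 := by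
  intro J
  set σ : Fin 3 → Fin 4 := ![0, 1, 3] with hσ
  set q : MvPolynomial (Fin 4) F := MvPolynomial.rename σ p with hq
  set g : MvPolynomial (Fin 4) F :=
    C (α₁ : F) * X 1 ^ (α₁ - 1) + X 0 * MvPolynomial.pderiv 1 q with hg
  set v : Fin 4 → MvPolynomial (Fin 4) F := ![0, X 0 ^ n, g, 0] with hv
  set D₀ : Derivation F (MvPolynomial (Fin 4) F) (MvPolynomial (Fin 4) F) :=
    MvPolynomial.mkDerivation F v with hD₀
  have hv0 : D₀ (X 0) = 0 := by rw [hD₀, mkDerivation_X]; rfl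
  have hv1 : D₀ (X 1) = X 0 ^ n := by rw [hD₀, mkDerivation_X]; rfl
  have hv2 : D₀ (X 2) = g := by rw [hD₀, mkDerivation_X]; rfl
  have hv3 : D₀ (X 3) = 0 := by rw [hD₀, mkDerivation_X]; rfl
  -- chain rule for polynomials in the variables x, y, t
  have key : ∀ r : MvPolynomial (Fin 3) F,
      D₀ (MvPolynomial.rename σ r) = MvPolynomial.pderiv 1 (MvPolynomial.rename σ r) * X 0 ^ n := by
    intro r
    induction r using MvPolynomial.induction_on with
    | C a => simp
    | add r s hr hs => simp [hr, hs, add_mul]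
    | mul_X r i hr =>
      rw [map_mul, rename_X, Derivation.leibniz, smul_eq_mul, smul_eq_mul, hr,
        pderiv_mul]
      fin_cases i <;>
        simp [σ, hv0, hv1, hv3, pderiv_X, Pi.single_apply] <;> ring
  -- the generator is killed by D₀
  have hf : D₀ ((X 0 : MvPolynomial (Fin 4) F) ^ n * X 2 - X 1 ^ α₁ - X 3 ^ α₂ - X 0 * q) = 0 := by
    rw [map_sub, map_sub, map_sub, Derivation.leibniz, Derivation.leibniz_pow,
      Derivation.leibniz_pow, Derivation.leibniz_pow, Derivation.leibniz, key p, ← hq, hv0, hv1,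
      hv2, hv3, hg]
    simp only [smul_zero, smul_eq_mul, mul_zero, zero_mul, smul_add, add_zero, zero_add,
      nsmul_eq_mul]
    rw [show ((α₁ : MvPolynomial (Fin 4) F)) = C (α₁ : F) by simp]
    ring
  -- D₀ preserves the ideal J
  have hJ : ∀ x ∈ J, D₀ x ∈ J := by
    intro x hx
    rw [show J = Ideal.span {(X 0 : MvPolynomial (Fin 4) F) ^ n * X 2 - X 1 ^ α₁ - X 3 ^ α₂ -
        X 0 * q} from rfl, Ideal.mem_span_singleton] at hx ⊢
    obtain ⟨c, rfl⟩ := hx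
    exact ⟨D₀ c, by rw [Derivation.leibniz, hf, smul_eq_mul, smul_eq_mul, mul_zero, add_zero]⟩
  have hcong : ∀ x y : MvPolynomial (Fin 4) F, Ideal.Quotient.mk J x = Ideal.Quotient.mk J y →
      Ideal.Quotient.mk J (D₀ x) = Ideal.Quotient.mk J (D₀ y) := by
    intro x y h
    rw [Ideal.Quotient.eq] at h ⊢
    rw [← map_sub]
    exact hJ _ h
  -- the induced map on the quotient
  let Dfun : (MvPolynomial (Fin 4) F ⧸ J) → (MvPolynomial (Fin 4) F ⧸ J) :=
    fun a => Quotient.liftOn' a (fun x => Ideal.Quotient.mk J (D₀ x))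
      (fun x y h => hcong x y (Quotient.sound' h))
  have hDfun : ∀ x : MvPolynomial (Fin 4) F,
      Dfun (Ideal.Quotient.mk J x) = Ideal.Quotient.mk J (D₀ x) := fun _ => rfl
  have hsmul : ∀ (r : F) (x : MvPolynomial (Fin 4) F),
      Ideal.Quotient.mk J (r • x) = r • Ideal.Quotient.mk J x := by
    intro r x
    rw [← Ideal.Quotient.mkₐ_eq_mk F J]
    exact map_smul (Ideal.Quotient.mkₐ F J) r x
  let D : Derivation F (MvPolynomial (Fin 4) F ⧸ J) (MvPolynomial (Fin 4) F ⧸ J) :=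
    { toFun := Dfun
      map_add' := by
        intro a b
        obtain ⟨x, rfl⟩ := Ideal.Quotient.mk_surjective a
        obtain ⟨y, rfl⟩ := Ideal.Quotient.mk_surjective b
        rw [← map_add, hDfun, hDfun, hDfun, map_add, map_add]
      map_smul' := by
        intro r a
        obtain ⟨x, rfl⟩ := Ideal.Quotient.mk_surjective a
        show Dfun (r • Ideal.Quotient.mk J x) = (RingHom.id F) r • Dfun (Ideal.Quotient.mk J x)
        rw [RingHom.id_apply, ← hsmul, hDfun, hDfun, Derivation.map_smul, hsmul]
      map_one_eq_zero' := by
        show Dfun 1 = 0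
        rw [show (1 : MvPolynomial (Fin 4) F ⧸ J) = Ideal.Quotient.mk J 1 from rfl, hDfun,
          Derivation.map_one_eq_zero, map_zero]
      leibniz' := by
        intro a b
        obtain ⟨x, rfl⟩ := Ideal.Quotient.mk_surjective a
        obtain ⟨y, rfl⟩ := Ideal.Quotient.mk_surjective b
        show Dfun (Ideal.Quotient.mk J x * Ideal.Quotient.mk J y) = _
        rw [← map_mul, hDfun, Derivation.leibniz, map_add, smul_eq_mul, smul_eq_mul, map_mul,
          map_mul]
        show _ = Ideal.Quotient.mk J x • Dfun (Ideal.Quotient.mk J y) +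
          Ideal.Quotient.mk J y • Dfun (Ideal.Quotient.mk J x)
        rw [hDfun, hDfun, smul_eq_mul, smul_eq_mul] }
  have hDapp : ∀ x : MvPolynomial (Fin 4) F,
      D (Ideal.Quotient.mk J x) = Ideal.Quotient.mk J (D₀ x) := fun x => rfl
  have hDx0 : D (Ideal.Quotient.mk J (X 0)) = 0 := by rw [hDapp, hv0, map_zero]
  have hDx3 : D (Ideal.Quotient.mk J (X 3)) = 0 := by rw [hDapp, hv3, map_zero]
  have hDx1 : D (Ideal.Quotient.mk J (X 1)) = Ideal.Quotient.mk J (X 0 ^ n) := by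
    rw [hDapp, hv1]
  have hDx2 : D (Ideal.Quotient.mk J (X 2)) = Ideal.Quotient.mk J g := by rw [hDapp, hv2]
  refine ⟨D, hDx0, hDx3, hDx1, by rw [hDx2, hg, hq], ?_⟩
  -- local nilpotence
  set S : Subalgebra F (MvPolynomial (Fin 4) F ⧸ J) := nilAlg F _ D with hS
  have mem_of : ∀ a, D a ∈ S → a ∈ S := fun a h => mem_nilAlg_of_D h
  have mem_of_zero : ∀ a, D a = 0 → a ∈ S := fun a h =>
    mem_of a (h ▸ ⟨0, by simp⟩)
  have hx0S : Ideal.Quotient.mk J (X 0) ∈ S := mem_of_zero _ hDx0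
  have hx3S : Ideal.Quotient.mk J (X 3) ∈ S := mem_of_zero _ hDx3
  have hx1S : Ideal.Quotient.mk J (X 1) ∈ S := by
    refine mem_of _ ?_
    rw [hDx1, map_pow]
    exact pow_mem hx0S n
  have hCS : ∀ c : F, Ideal.Quotient.mk J (C c) ∈ S := by
    intro c
    have : Ideal.Quotient.mk J (C c) = algebraMap F _ c := by
      rw [← Ideal.Quotient.mkₐ_eq_mk F J, show (C c : MvPolynomial (Fin 4) F) =
        algebraMap F _ c from rfl, AlgHom.commutes]
    rw [this]
    exact S.algebraMap_mem c
  have hrenS : ∀ r : MvPolynomial (Fin 3) F,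
      Ideal.Quotient.mk J (MvPolynomial.rename σ r) ∈ S := by
    intro r
    induction r using MvPolynomial.induction_on with
    | C a => rw [rename_C]; exact hCS a
    | add r s hr hs => rw [map_add, map_add]; exact add_mem hr hs
    | mul_X r i hr =>
      rw [map_mul, rename_X, map_mul]
      refine mul_mem hr ?_
      fin_cases i
      · exact hx0S
      · exact hx1S
      · exact hx3S
  have hx2S : Ideal.Quotient.mk J (X 2) ∈ S := by
    refine mem_of _ ?_
    rw [hDx2, hg, map_add, map_mul, map_mul, map_pow]
    refine add_mem (mul_mem (hCS _) (pow_mem hx1S _)) (mul_mem hx0S ?_)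
    have hinj : Function.Injective σ := by
      rw [hσ]; decide
    rw [hq, show (1 : Fin 4) = σ 1 from rfl, pderiv_rename hinj]
    exact hrenS _
  have hall : ∀ x : MvPolynomial (Fin 4) F, Ideal.Quotient.mk J x ∈ S := by
    intro x
    induction x using MvPolynomial.induction_on with
    | C a => exact hCS a
    | add r s hr hs => rw [map_add]; exact add_mem hr hs
    | mul_X r i hr =>
      rw [map_mul]
      refine mul_mem hr ?_
      fin_cases i
      · exact hx0S
      · exact hx1S
      · exact hx2S
      · exact hx3S
  intro a
  obtain ⟨x, rfl⟩ := Ideal.Quotient.mk_surjective a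
  obtain ⟨N, hN⟩ := hall x
  rw [Module.End.pow_apply] at hN
  exact ⟨N, hN⟩
end

section
/- Let A be an integral domain, f ∈ A nonzero, and I ⊆ A an ideal containing f. Then the subring A[I/f] := { a/f^k : a ∈ I^k, k ≥ 0 } of the localization A_f is isomorphic as an A-algebra to the quotient of the Rees algebra A[tI] = ⊕_{n≥0} Iⁿtⁿ ⊆ A[t] by the ideal generated by (1 - tf). -/
/-!
Evaluating the Rees algebra `A[tI] ⊆ A[t]` at `t = 1/f` is an `A`-algebra map to `A_f`. Since
`A_f ≅ A[t]/(ft - 1)`, a polynomial evaluates to zero iff it is a multiple of `1 - ft` in `A[t]`;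
as `f ∈ I`, the cofactor of an element of `A[tI]` again lies in `A[tI]` (compare coefficients
degree by degree), so the kernel is the ideal of `A[tI]` generated by `1 - ft`. The image is
spanned by the elements `a/f^k` with `a ∈ I^k`, and these are closed under sums and products
because `I^k f^l ⊆ I^(k+l)`.
-/

open Polynomial

theorem mem_reesAlgebra_of_one_sub_C_mul_X_mul_mem {A : Type*} [CommRing A] {f : A}
    {I : Ideal A} (hfI : f ∈ I) {q : A[X]} (hq : (1 - C f * X) * q ∈ reesAlgebra I) :
    q ∈ reesAlgebra I := by
  rw [mem_reesAlgebra_iff] at hq ⊢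
  intro i
  induction i with
  | zero => simp
  | succ i ih =>
    have hcoeff : q.coeff (i + 1) = ((1 - C f * X) * q).coeff (i + 1) + q.coeff i * f := by
      rw [sub_mul, one_mul, coeff_sub, mul_assoc, coeff_C_mul, coeff_X_mul]
      ring
    rw [hcoeff, pow_succ]
    exact add_mem (hq (i + 1)) (Ideal.mul_mem_mul ih hfI)

theorem Localization.Away.aeval_invSelf_eq_zero_iff {A : Type*} [CommRing A] (f : A)
    (p : A[X]) :
    aeval (IsLocalization.Away.invSelf f : Away f) p = 0 ↔ C f * X - 1 ∣ p := by
  have hroot : (awayEquivAdjoin f).symm (AdjoinRoot.root _) = IsLocalization.Away.invSelf f :=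
    AdjoinRoot.liftAlgHom_root (p := C f * X - 1) _ _ (by simp)
  have heval : aeval (IsLocalization.Away.invSelf f : Away f) p =
      (awayEquivAdjoin f).symm (AdjoinRoot.mk _ p) := by
    rw [← AdjoinRoot.aeval_eq, ← hroot, aeval_algEquiv]
    rfl
  rw [heval, map_eq_zero_iff _ (awayEquivAdjoin f).symm.injective, AdjoinRoot.mk_eq_zero]

theorem Ideal.Quotient.range_liftₐ {R A B : Type*} [CommSemiring R] [Ring A] [Algebra R A]
    [Semiring B] [Algebra R B] (I : Ideal A) [I.IsTwoSided] (φ : A →ₐ[R] B)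
    (hI : ∀ a ∈ I, φ a = 0) :
    (Ideal.Quotient.liftₐ I φ hI).range = φ.range := by
  conv_rhs => rw [← Ideal.Quotient.liftₐ_comp I φ hI]
  rw [AlgHom.range_comp, (AlgHom.range_eq_top _).2 (Ideal.Quotient.mkₐ_surjective R I),
    Algebra.map_top]

section EvalReesAlgebra

variable {A B : Type*} [CommRing A] [CommRing B] [Algebra A B] {f : A} {u : B}
  {I : Ideal A}

theorem exists_aeval_mul_pow_eq_of_mem_reesAlgebra (hfI : f ∈ I)
    (hu : algebraMap A B f * u = 1) {p : A[X]} (hp : p ∈ reesAlgebra I) :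
    ∃ k : ℕ, ∃ a ∈ I ^ k, aeval u p * algebraMap A B (f ^ k) = algebraMap A B a := by
  rw [← adjoin_monomial_eq_reesAlgebra] at hp
  induction hp using Algebra.adjoin_induction with
  | mem x hx =>
    obtain ⟨r, hr, rfl⟩ := hx
    refine ⟨1, r, by rwa [pow_one], ?_⟩
    rw [aeval_monomial, pow_one, pow_one, mul_assoc, mul_comm u, hu, mul_one]
  | algebraMap r =>
    exact ⟨0, r, by simp, by simp⟩
  | add x y _ _ ihx ihy =>
    obtain ⟨k, a, ha, hx⟩ := ihx
    obtain ⟨l, b, hb, hy⟩ := ihy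
    refine ⟨k + l, a * f ^ l + f ^ k * b, ?_, ?_⟩
    · rw [pow_add]
      exact add_mem (Ideal.mul_mem_mul ha (Ideal.pow_mem_pow hfI l))
        (Ideal.mul_mem_mul (Ideal.pow_mem_pow hfI k) hb)
    · simp only [map_add, map_mul, map_pow, pow_add] at hx hy ⊢
      linear_combination algebraMap A B f ^ l * hx + algebraMap A B f ^ k * hy
  | mul x y _ _ ihx ihy =>
    obtain ⟨k, a, ha, hx⟩ := ihx
    obtain ⟨l, b, hb, hy⟩ := ihy
    refine ⟨k + l, a * b, by rw [pow_add]; exact Ideal.mul_mem_mul ha hb, ?_⟩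
    simp only [map_mul, map_pow, pow_add] at hx hy ⊢
    linear_combination aeval u y * algebraMap A B f ^ l * hx + algebraMap A B a * hy

theorem aeval_monomial_eq_of_mul_pow_eq (hu : algebraMap A B f * u = 1) {x : B} {k : ℕ}
    {a : A} (h : x * algebraMap A B (f ^ k) = algebraMap A B a) :
    aeval u (monomial k a) = x :=
  calc aeval u (monomial k a) = x * algebraMap A B (f ^ k) * u ^ k := by
        rw [aeval_monomial, h]
    _ = x * (algebraMap A B f * u) ^ k := by rw [map_pow]; ring
    _ = x := by rw [hu, one_pow, mul_one]

theorem range_aeval_comp_val_reesAlgebra (hfI : f ∈ I) (hu : algebraMap A B f * u = 1) :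
    (((aeval u).comp (reesAlgebra I).val).range : Set B) =
      {x | ∃ k : ℕ, ∃ a ∈ I ^ k, x * algebraMap A B (f ^ k) = algebraMap A B a} := by
  ext x
  constructor
  · rintro ⟨p, rfl⟩
    exact exists_aeval_mul_pow_eq_of_mem_reesAlgebra hfI hu p.2
  · rintro ⟨k, a, ha, h⟩
    exact ⟨⟨monomial k a, reesAlgebra.monomial_mem.mpr ha⟩, aeval_monomial_eq_of_mul_pow_eq hu h⟩

end EvalReesAlgebra

theorem ker_aeval_invSelf_comp_val_reesAlgebra {A : Type*} [CommRing A] {f : A}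
    {I : Ideal A} (hfI : f ∈ I) (w : reesAlgebra I) (hw : (w : A[X]) = 1 - C f * X) :
    RingHom.ker ((aeval (IsLocalization.Away.invSelf f : Localization.Away f)).comp
      (reesAlgebra I).val) = Ideal.span {w} := by
  ext p
  rw [RingHom.mem_ker, Ideal.mem_span_singleton]
  constructor
  · intro hp
    obtain ⟨q, hq⟩ := (Localization.Away.aeval_invSelf_eq_zero_iff f p).1 hp
    have hpq : (p : A[X]) = (w : A[X]) * -q := by rw [hw, hq]; ring
    have hq_mem : -q ∈ reesAlgebra I :=
      mem_reesAlgebra_of_one_sub_C_mul_X_mul_mem hfI (hw ▸ hpq ▸ p.2)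
    exact ⟨⟨-q, hq_mem⟩, Subtype.ext hpq⟩
  · rintro ⟨q, rfl⟩
    have hfu := IsLocalization.Away.mul_invSelf (S := Localization.Away f) f
    simp [hw, hfu]

theorem stmt_5_general (A : Type*) [CommRing A] (f : A)
    (I : Ideal A) (hfI : f ∈ I) (w : reesAlgebra I)
    (hw : (w : Polynomial A) = 1 - Polynomial.C f * Polynomial.X) :
    ∃ ψ : (reesAlgebra I ⧸ Ideal.span {w}) →ₐ[A] Localization.Away f,
      Function.Injective ψ ∧
      (ψ.range : Set (Localization.Away f)) =
        {x | ∃ k : ℕ, ∃ a ∈ I ^ k,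
          x * algebraMap A (Localization.Away f) (f ^ k) =
            algebraMap A (Localization.Away f) a} := by
  let φ := (aeval (IsLocalization.Away.invSelf f : Localization.Away f)).comp (reesAlgebra I).val
  have hker : RingHom.ker φ = Ideal.span {w} := ker_aeval_invSelf_comp_val_reesAlgebra hfI w hw
  have hφ : ∀ p ∈ Ideal.span {w}, φ p = 0 := fun p hp => by rwa [← hker] at hp
  refine ⟨Ideal.Quotient.liftₐ _ φ hφ, ?_, ?_⟩
  · exact RingHom.lift_injective_of_ker_le_ideal _ hφ hker.le
  · rw [Ideal.Quotient.range_liftₐ]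
    exact range_aeval_comp_val_reesAlgebra hfI (IsLocalization.Away.mul_invSelf f)

/-- For a domain `A`, `0 ≠ f ∈ I`, the subring
`A[I/f] = {a/f^k : a ∈ I^k} ⊆ A_f` is `A`-algebra isomorphic to the quotient of the Rees
algebra `A[tI]` by the ideal generated by `1 - tf`. Formalized: there is an injective
`A`-algebra map from the Rees-algebra quotient to `Localization.Away f` whose range is
exactly the set `{x : ∃ k, ∃ a ∈ I^k, x·f^k = a}`. -/
theorem stmt_5 (A : Type*) [CommRing A] [IsDomain A] (f : A) (hf : f ≠ 0)
    (I : Ideal A) (hfI : f ∈ I) (w : reesAlgebra I)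
    (hw : (w : Polynomial A) = 1 - Polynomial.C f * Polynomial.X) :
    ∃ ψ : (reesAlgebra I ⧸ Ideal.span {w}) →ₐ[A] Localization.Away f,
      Function.Injective ψ ∧
      (ψ.range : Set (Localization.Away f)) =
        {x | ∃ k : ℕ, ∃ a ∈ I ^ k,
          x * algebraMap A (Localization.Away f) (f ^ k) =
            algebraMap A (Localization.Away f) a} :=
  stmt_5_general A f I hfI w hw
end

section
/- Let F be an algebraically closed field, α₁, α₂ ≥ 2 coprime integers, and m ≥ 1 with α₃ = mα₁α₂ + 1. Let Γ = {u^{α₁} + v^{α₂} = 0} ⊂ A²_{u,v} and let U = S \ {y₃ = 0} where S = {y₁^{α₁} + y₂^{α₂} + y₃^{α₃} = 0} ⊂ A³. Then the map A² \ Γ → U given by (u,v) ↦ (u·(−u^{α₁}−v^{α₂})^{mα₂}, v·(−u^{α₁}−v^{α₂})^{mα₁}, −u^{α₁}−v^{α₂}) is an isomorphism of varieties, with inverse (y₁,y₂,y₃) ↦ (y₁/y₃^{mα₂}, y₂/y₃^{mα₁}). -/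
/-- With `α₃ = mα₁α₂ + 1`, the map
`(u,v) ↦ (u·w^{mα₂}, v·w^{mα₁}, w)`, `w = −u^α₁−v^α₂`, is an isomorphism from
`𝔸² ∖ Γ` (where `Γ = {u^α₁+v^α₂ = 0}`) onto `U = S ∖ {y₃ = 0}` of the Brieskorn-Pham
surface `S = {y₁^α₁+y₂^α₂+y₃^α₃ = 0}`, with inverse `(y₁,y₂,y₃) ↦ (y₁/y₃^{mα₂}, y₂/y₃^{mα₁})`. -/
theorem stmt_11 (F : Type*) [Field F] [IsAlgClosed F] (α₁ α₂ m : ℕ)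
    (h1 : 2 ≤ α₁) (h2 : 2 ≤ α₂) (hcop : Nat.Coprime α₁ α₂) (hm : 1 ≤ m)
    (α₃ : ℕ) (hα₃ : α₃ = m * α₁ * α₂ + 1) :
    (∀ u v : F, u ^ α₁ + v ^ α₂ ≠ 0 →
      ((u * (-u ^ α₁ - v ^ α₂) ^ (m * α₂)) ^ α₁ + (v * (-u ^ α₁ - v ^ α₂) ^ (m * α₁)) ^ α₂ +
          (-u ^ α₁ - v ^ α₂) ^ α₃ = 0) ∧
      (-u ^ α₁ - v ^ α₂) ≠ 0 ∧
      (u * (-u ^ α₁ - v ^ α₂) ^ (m * α₂)) / (-u ^ α₁ - v ^ α₂) ^ (m * α₂) = u ∧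
      (v * (-u ^ α₁ - v ^ α₂) ^ (m * α₁)) / (-u ^ α₁ - v ^ α₂) ^ (m * α₁) = v) ∧
    (∀ y₁ y₂ y₃ : F, y₁ ^ α₁ + y₂ ^ α₂ + y₃ ^ α₃ = 0 → y₃ ≠ 0 →
      ((y₁ / y₃ ^ (m * α₂)) ^ α₁ + (y₂ / y₃ ^ (m * α₁)) ^ α₂ ≠ 0) ∧
      (y₁ / y₃ ^ (m * α₂)) *
          (-(y₁ / y₃ ^ (m * α₂)) ^ α₁ - (y₂ / y₃ ^ (m * α₁)) ^ α₂) ^ (m * α₂) = y₁ ∧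
      (y₂ / y₃ ^ (m * α₁)) *
          (-(y₁ / y₃ ^ (m * α₂)) ^ α₁ - (y₂ / y₃ ^ (m * α₁)) ^ α₂) ^ (m * α₁) = y₂ ∧
      (-(y₁ / y₃ ^ (m * α₂)) ^ α₁ - (y₂ / y₃ ^ (m * α₁)) ^ α₂) = y₃) := by
  subst hα₃
  constructor
  · intro u v huv
    have hw : (-u ^ α₁ - v ^ α₂) ≠ 0 := by
      intro h
      apply huv
      linear_combination -h
    have hwp₂ : (-u ^ α₁ - v ^ α₂) ^ (m * α₂) ≠ 0 := pow_ne_zero _ hw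
    have hwp₁ : (-u ^ α₁ - v ^ α₂) ^ (m * α₁) ≠ 0 := pow_ne_zero _ hw
    refine ⟨?_, hw, mul_div_cancel_right₀ u hwp₂, mul_div_cancel_right₀ v hwp₁⟩
    have e1 : (u * (-u ^ α₁ - v ^ α₂) ^ (m * α₂)) ^ α₁
        = u ^ α₁ * (-u ^ α₁ - v ^ α₂) ^ (m * α₁ * α₂) := by
      rw [mul_pow, ← pow_mul, mul_right_comm m α₂ α₁]
    have e2 : (v * (-u ^ α₁ - v ^ α₂) ^ (m * α₁)) ^ α₂
        = v ^ α₂ * (-u ^ α₁ - v ^ α₂) ^ (m * α₁ * α₂) := by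
      rw [mul_pow, ← pow_mul]
    rw [e1, e2, pow_succ]
    ring
  · intro y₁ y₂ y₃ hS hy₃
    have hN : y₃ ^ (m * α₁ * α₂) ≠ 0 := pow_ne_zero _ hy₃
    have h₂ : (y₃ ^ (m * α₂)) ≠ 0 := pow_ne_zero _ hy₃
    have h₁ : (y₃ ^ (m * α₁)) ≠ 0 := pow_ne_zero _ hy₃
    have key : (-(y₁ / y₃ ^ (m * α₂)) ^ α₁ - (y₂ / y₃ ^ (m * α₁)) ^ α₂) = y₃ := by
      rw [div_pow, div_pow, ← pow_mul, ← pow_mul, mul_right_comm m α₂ α₁]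
      rw [pow_succ] at hS
      rw [show -(y₁ ^ α₁ / y₃ ^ (m * α₁ * α₂)) - y₂ ^ α₂ / y₃ ^ (m * α₁ * α₂)
          = (-y₁ ^ α₁ - y₂ ^ α₂) / y₃ ^ (m * α₁ * α₂) by ring, div_eq_iff hN]
      linear_combination -hS
    refine ⟨?_, ?_, ?_, key⟩
    · intro h
      exact hy₃ (by rw [← key]; linear_combination -h)
    · rw [key, div_mul_cancel₀ _ h₂]
    · rw [key, div_mul_cancel₀ _ h₁]
end

section
/- Let F be a field of characteristic zero and k > l ≥ 2 coprime integers. Then ((xz+1)^k − (yz+1)^l − z) is divisible by z in F[x,y,z]; that is, there exists a polynomial P(x,y,z) ∈ F[x,y,z] with z·P = (xz+1)^k − (yz+1)^l − z, and P(x,y,0) = kx − ly − 1. Moreover, the surface V_{k,l} = {P = 0} ⊂ A³ is smooth. -/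
open MvPolynomial

/-- For coprime `k > l ≥ 2`, `(xz+1)^k − (yz+1)^l − z` is divisible by `z` in
`F[x,y,z]`, the quotient `P` satisfies `P(x,y,0) = kx − ly − 1`, and the tom Dieck-Petrie
surface `V_{k,l} = {P = 0}` is smooth (Jacobian criterion over the algebraic closure). -/
theorem stmt_13 (F : Type*) [Field F] [CharZero F] (k l : ℕ) (hl : 2 ≤ l) (hkl : l < k)
    (hcop : Nat.Coprime k l) :
    ∃ P : MvPolynomial (Fin 3) F,
      X 2 * P = (X 0 * X 2 + 1) ^ k - (X 1 * X 2 + 1) ^ l - X 2 ∧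
      MvPolynomial.aeval (![X 0, X 1, 0] : Fin 3 → MvPolynomial (Fin 3) F) P =
        C (k : F) * X 0 - C (l : F) * X 1 - 1 ∧
      ∀ v : Fin 3 → AlgebraicClosure F,
        MvPolynomial.eval v (MvPolynomial.map (algebraMap F (AlgebraicClosure F)) P) = 0 →
        ∃ i : Fin 3,
          MvPolynomial.eval v
            (MvPolynomial.pderiv i
              (MvPolynomial.map (algebraMap F (AlgebraicClosure F)) P)) ≠ 0 := by
  set P : MvPolynomial (Fin 3) F :=
    X 0 * (∑ j ∈ Finset.range k, (X 0 * X 2 + 1) ^ j)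
      - X 1 * (∑ j ∈ Finset.range l, (X 1 * X 2 + 1) ^ j) - 1 with hPdef
  have gk := geom_sum_mul (X 0 * X 2 + 1 : MvPolynomial (Fin 3) F) k
  have gl := geom_sum_mul (X 1 * X 2 + 1 : MvPolynomial (Fin 3) F) l
  have hP : X 2 * P = (X 0 * X 2 + 1) ^ k - (X 1 * X 2 + 1) ^ l - X 2 := by
    rw [hPdef]; linear_combination gk - gl
  refine ⟨P, hP, ?_, ?_⟩
  · rw [hPdef]
    simp [Finset.sum_const, Finset.card_range, mul_comm]
  · have hX2 : (X 2 : MvPolynomial (Fin 3) F) ≠ 0 := X_ne_zero 2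
    have d0 : pderiv 0 P = (k : MvPolynomial (Fin 3) F) * (X 0 * X 2 + 1) ^ (k - 1) := by
      apply mul_left_cancel₀ hX2
      have := congrArg (pderiv 0) hP
      rw [map_sub, map_sub, pderiv_pow, pderiv_pow, pderiv_mul] at this
      simp [pderiv_X_self, pderiv_X_of_ne (show (0:Fin 3) ≠ 1 by decide),
        pderiv_X_of_ne (show (1:Fin 3) ≠ 0 by decide),
        pderiv_X_of_ne (show (2:Fin 3) ≠ 0 by decide)] at this
      rw [this]; ring
    have d1 : pderiv 1 P = -((l : MvPolynomial (Fin 3) F) * (X 1 * X 2 + 1) ^ (l - 1)) := by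
      apply mul_left_cancel₀ hX2
      have := congrArg (pderiv 1) hP
      rw [map_sub, map_sub, pderiv_pow, pderiv_pow, pderiv_mul] at this
      simp [pderiv_X_self, pderiv_X_of_ne (show (0:Fin 3) ≠ 1 by decide),
        pderiv_X_of_ne (show (1:Fin 3) ≠ 0 by decide),
        pderiv_X_of_ne (show (2:Fin 3) ≠ 1 by decide)] at this
      rw [this]; ring
    intro v hv
    by_contra hcon
    push_neg at hcon
    have h0 := hcon 0
    have h1 := hcon 1
    rw [pderiv_map, d0] at h0
    rw [pderiv_map, d1] at h1
    simp only [map_mul, map_pow, map_add, map_one, map_natCast, map_neg, MvPolynomial.map_X,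
      eval_mul, eval_pow, eval_add, eval_X, eval_neg, neg_eq_zero, map_one,
      mul_eq_zero] at h0 h1
    have hk0 : ((k : AlgebraicClosure F)) ≠ 0 := Nat.cast_ne_zero.mpr (by omega)
    have hl0 : ((l : AlgebraicClosure F)) ≠ 0 := Nat.cast_ne_zero.mpr (by omega)
    have e0 : v 0 * v 2 + 1 = 0 := by
      rcases h0 with h | h
      · exact absurd h hk0
      · exact (pow_eq_zero_iff (Nat.sub_ne_zero_of_lt (by omega))).mp h
    have e1 : v 1 * v 2 + 1 = 0 := by
      rcases h1 with h | h
      · exact absurd h hl0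
      · exact (pow_eq_zero_iff (Nat.sub_ne_zero_of_lt (by omega))).mp h
    have hQ := congrArg (fun q => eval v (map (algebraMap F (AlgebraicClosure F)) q)) hP
    simp only [map_mul, map_sub, map_pow, map_add, map_one, MvPolynomial.map_X,
      eval_mul, eval_sub, eval_pow, eval_add, eval_X] at hQ
    rw [e0, e1, hv, mul_zero, zero_pow (by omega), zero_pow (by omega)] at hQ
    have hv2 : v 2 = 0 := by simpa using hQ.symm
    rw [hv2, mul_zero, zero_add] at e0
    exact one_ne_zero e0
end
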